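/- arXiv:2210.10579 — 3 statements merged into one kernel-verified Lean document; each statement's English description precedes it below -/
import Mathlib

section
/- Let G be a connected simple graph on n ≥ 3 vertices with Wiener index W(G) and maximum transmission Tr_max(G). Then DLS(G) ≥ ((n−1)(Tr_max(G)+1) − 2W(G))/(n−2), with equality if and only if G is the complete graph K_n. -/
open Finset Matrix Polynomial

/-- The transmission `Tr(v)` of a vertex `v`: the sum of the distances from `v`
to all other vertices of the graph. -/
noncomputable def transm {n : ℕ} (G : SimpleGraph (Fin n)) (v : Fin n) : ℝ :=
  ∑ u : Fin n, (G.dist v u : ℝ)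

/-- The distance Laplacian matrix `D^L(G) = Diag(Tr) - D(G)` of a graph `G`. -/
noncomputable def distLap {n : ℕ} (G : SimpleGraph (Fin n)) : Matrix (Fin n) (Fin n) ℝ :=
  Matrix.diagonal (transm G) - Matrix.of (fun u v : Fin n => (G.dist u v : ℝ))

/-- `IsDLSpec G μ` says that `μ 0 , μ 1 , …, μ (n-1)` are exactly the eigenvalues
(with multiplicity) of the distance Laplacian matrix of `G`; combined with `Antitone μ`
this means `μ ⟨i-1,_⟩ = ∂_i^L(G)` in the usual decreasing ordering. -/
def IsDLSpec {n : ℕ} (G : SimpleGraph (Fin n)) (μ : Fin n → ℝ) : Prop :=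
  (distLap G).charpoly = ∏ i : Fin n, (X - C (μ i))

/-- The Wiener index `W(G) = (1/2) ∑_v Tr(v)`. -/
noncomputable def wiener {n : ℕ} (G : SimpleGraph (Fin n)) : ℝ :=
  (∑ v : Fin n, transm G v) / 2

/-- The maximum transmission `Tr_max(G) = max_v Tr(v)`. -/
noncomputable def trMax {n : ℕ} (G : SimpleGraph (Fin n)) : ℝ :=
  ⨆ v : Fin n, transm G v

/-!
Let `T = Tr_max(G) = Tr(v)`. Since `D^L(G) 𝟙 = 0`, the Rayleigh quotient of `D^L(G)` at the test
vector `n e_v - 𝟙` is `n T / (n - 1)`, so `∂₁ ≥ n T / (n - 1) ≥ T + 1`, using `T ≥ n - 1` for a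
connected graph. The eigenvalues are nonnegative (`D^L(G)` is diagonally dominant), sum to the trace
`2 W(G)`, and all but the first and the last are at least `∂_{n-1}`; hence
`∂₁ + (n - 2) ∂_{n-1} ≤ 2 W(G)`, and the two bounds combine to the inequality. Equality forces
`∂₁ = T + 1`, hence `T ≤ n - 1`, which makes every vertex adjacent to all others. Conversely
`D^L(K_n) = n I - J` has only the eigenvalues `0` and `n`, and the trace `n (n - 1)` leaves room for
only one `0`, so both sides of the inequality vanish.
-/

namespace Matrix

variable {n : Type*} [Fintype n] [DecidableEq n]

theorem spectrum_eq_range_of_charpoly_eq_prod {K : Type*} [Field K] {A : Matrix n n K}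
    {μ : n → K} (h : A.charpoly = ∏ i, (X - C (μ i))) : spectrum K A = Set.range μ := by
  ext r
  rw [mem_spectrum_iff_isRoot_charpoly, h, IsRoot, eval_prod, prod_eq_zero_iff]
  simp [sub_eq_zero, eq_comm]

theorem trace_eq_sum_of_charpoly_eq_prod {K : Type*} [Field K] {A : Matrix n n K}
    {μ : n → K} (h : A.charpoly = ∏ i, (X - C (μ i))) : A.trace = ∑ i, μ i := by
  have hsplit : A.charpoly.Splits := h ▸ Splits.prod fun i _ => Splits.X_sub_C (μ i)
  rw [trace_eq_sum_roots_charpoly_of_splits hsplit, h,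
    roots_prod _ _ (prod_ne_zero_iff.mpr fun i _ => X_sub_C_ne_zero (μ i))]
  simp only [roots_X_sub_C, Multiset.bind_singleton]
  rfl

theorem exists_mulVec_eq_smul_of_mem_spectrum {K : Type*} [Field K] {A : Matrix n n K} {r : K}
    (hr : r ∈ spectrum K A) : ∃ v ≠ 0, A *ᵥ v = r • v := by
  rw [← spectrum_toLin', ← Module.End.hasEigenvalue_iff_mem_spectrum] at hr
  obtain ⟨v, hv, hv0⟩ := hr.exists_hasEigenvector
  exact ⟨v, hv0, Module.End.mem_eigenspace_iff.mp hv⟩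

theorem IsHermitian.dotProduct_mulVec_le {A : Matrix n n ℝ} (hA : A.IsHermitian) {c : ℝ}
    (hc : ∀ r ∈ spectrum ℝ A, r ≤ c) (x : n → ℝ) : x ⬝ᵥ A *ᵥ x ≤ c * (x ⬝ᵥ x) := by
  have hpos : (algebraMap ℝ (Matrix n n ℝ) c - A).PosSemidef := by
    refine posSemidef_iff_isHermitian_and_spectrum_nonneg.mpr ⟨(isHermitian_diagonal _).sub hA, ?_⟩
    rw [← spectrum.singleton_sub_eq]
    rintro _ ⟨_, rfl, r, hr, rfl⟩
    exact sub_nonneg.mpr (hc r hr)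
  have := hpos.dotProduct_mulVec_nonneg x
  simp only [Algebra.algebraMap_eq_smul_one, sub_mulVec, smul_mulVec, one_mulVec, dotProduct_sub,
    dotProduct_smul, star_trivial, smul_eq_mul] at this
  linarith

theorem IsHermitian.posSemidef_of_sum_norm_le_diag {A : Matrix n n ℝ} (hA : A.IsHermitian)
    (h : ∀ k, ∑ j ∈ univ.erase k, ‖A k j‖ ≤ A k k) : A.PosSemidef := by
  refine posSemidef_iff_isHermitian_and_spectrum_nonneg.mpr ⟨hA, fun r hr => ?_⟩
  rw [← spectrum_toLin', ← Module.End.hasEigenvalue_iff_mem_spectrum] at hr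
  obtain ⟨k, hk⟩ := eigenvalue_mem_ball hr
  rw [Metric.mem_closedBall, Real.dist_eq] at hk
  simp only [Set.mem_ofPred_eq]
  linarith [h k, neg_abs_le (r - A k k)]

omit [DecidableEq n] in
theorem IsHermitian.one_vecMul_eq_zero {A : Matrix n n ℝ} (hA : A.IsHermitian)
    (h1 : A *ᵥ 1 = 0) : 1 ᵥ* A = 0 := by
  rw [← mulVec_transpose, ← conjTranspose_eq_transpose_of_trivial, hA, h1]

omit [DecidableEq n] in
theorem IsHermitian.dotProduct_mulVec_sub_one {A : Matrix n n ℝ} (hA : A.IsHermitian)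
    (h1 : A *ᵥ 1 = 0) (x : n → ℝ) : (x - 1) ⬝ᵥ A *ᵥ (x - 1) = x ⬝ᵥ A *ᵥ x := by
  rw [mulVec_sub, h1, sub_zero, sub_dotProduct, dotProduct_mulVec 1, hA.one_vecMul_eq_zero h1,
    zero_dotProduct, sub_zero]

end Matrix

section PairComplement

variable {ι : Type*} [Fintype ι] [DecidableEq ι]

theorem sum_eq_add_add_sum_compl_pair {M : Type*} [AddCommMonoid M] (f : ι → M) {i j : ι}
    (hij : i ≠ j) : ∑ k, f k = f i + f j + ∑ k ∈ {i, j}ᶜ, f k := by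
  rw [← sum_compl_add_sum {i, j}, sum_pair hij, add_comm]

theorem card_compl_pair {i j : ι} (hij : i ≠ j) : #({i, j}ᶜ : Finset ι) = Fintype.card ι - 2 := by
  rw [card_compl, card_pair hij]

end PairComplement

theorem Antitone.add_mul_le_sum {n : ℕ} (hn : 2 ≤ n) {μ : Fin n → ℝ} (hμ : Antitone μ) :
    μ ⟨0, by omega⟩ + ((n : ℝ) - 2) * μ ⟨n - 2, by omega⟩ + μ ⟨n - 1, by omega⟩ ≤ ∑ i, μ i := by
  set i : Fin n := ⟨0, by omega⟩
  set j : Fin n := ⟨n - 1, by omega⟩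
  have hij : i ≠ j := Fin.ne_of_val_ne (show 0 ≠ n - 1 by omega)
  have hmid : ∀ k ∈ ({i, j}ᶜ : Finset (Fin n)), μ ⟨n - 2, by omega⟩ ≤ μ k := fun k hk => by
    simp only [mem_compl, mem_insert, mem_singleton, not_or, j, Fin.ext_iff] at hk
    exact hμ (show k.val ≤ n - 2 by omega)
  have hmid_sum := card_nsmul_le_sum _ μ _ hmid
  rw [card_compl_pair hij, Fintype.card_fin, nsmul_eq_mul, Nat.cast_sub hn, Nat.cast_ofNat]
    at hmid_sum
  rw [sum_eq_add_add_sum_compl_pair μ hij]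
  linarith

section DistanceLaplacian

variable {n : ℕ} (G : SimpleGraph (Fin n))

theorem distLap_apply (u w : Fin n) :
    distLap G u w = (if u = w then transm G u else 0) - G.dist u w := by
  simp [distLap, diagonal_apply]

theorem distLap_apply_self (u : Fin n) : distLap G u u = transm G u := by
  simp [distLap_apply]

theorem transm_eq_sum_erase (u : Fin n) : transm G u = ∑ w ∈ univ.erase u, (G.dist u w : ℝ) :=
  (sum_erase _ (by simp)).symm

theorem distLap_isHermitian : (distLap G).IsHermitian := by
  ext u w
  by_cases h : u = w
  · simp [h]
  · simp [distLap_apply, h, Ne.symm h, SimpleGraph.dist_comm]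

theorem distLap_mulVec_one : distLap G *ᵥ 1 = 0 := by
  ext u
  simp [mulVec, dotProduct, distLap_apply, sum_sub_distrib, transm]

theorem distLap_posSemidef : (distLap G).PosSemidef := by
  refine (distLap_isHermitian G).posSemidef_of_sum_norm_le_diag fun k => le_of_eq ?_
  rw [distLap_apply_self, transm_eq_sum_erase]
  refine sum_congr rfl fun w hw => ?_
  simp [distLap_apply, (ne_of_mem_erase hw).symm]

theorem trace_distLap : (distLap G).trace = 2 * wiener G := by
  simp only [trace, diag_apply, distLap_apply_self, wiener]
  ring

theorem transm_top (u : Fin n) : transm (⊤ : SimpleGraph (Fin n)) u = n - 1 := by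
  rw [transm_eq_sum_erase, sum_congr rfl fun w hw => by
    rw [SimpleGraph.dist_top_of_ne (ne_of_mem_erase hw).symm]]
  simp [card_erase_of_mem, Nat.cast_pred u.pos]

theorem trMax_top (hn : 0 < n) : trMax (⊤ : SimpleGraph (Fin n)) = n - 1 := by
  have : Nonempty (Fin n) := ⟨⟨0, hn⟩⟩
  simp [trMax, transm_top]

theorem wiener_top : 2 * wiener (⊤ : SimpleGraph (Fin n)) = n * (n - 1) := by
  rw [wiener, mul_div_cancel₀ _ two_ne_zero]
  simp only [transm_top, sum_const, card_univ, Fintype.card_fin, nsmul_eq_mul]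

theorem distLap_top : distLap (⊤ : SimpleGraph (Fin n)) = (n : ℝ) • 1 - of fun _ _ => 1 := by
  ext u w
  by_cases h : u = w
  · simp [distLap_apply, h, transm_top]
  · simp [distLap_apply, h, SimpleGraph.dist_top_of_ne h]

theorem distLap_top_mulVec (x : Fin n → ℝ) :
    distLap (⊤ : SimpleGraph (Fin n)) *ᵥ x = (n : ℝ) • x - (∑ u, x u) • 1 := by
  rw [distLap_top, sub_mulVec, smul_mulVec, one_mulVec]
  ext u
  simp [mulVec, dotProduct]

theorem eq_zero_or_eq_of_mem_spectrum_distLap_top {r : ℝ}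
    (hr : r ∈ spectrum ℝ (distLap (⊤ : SimpleGraph (Fin n)))) : r = 0 ∨ r = n := by
  obtain ⟨x, hx, hxr⟩ := exists_mulVec_eq_smul_of_mem_spectrum hr
  have hsum : r * ∑ u, x u = 0 := by
    have := congrArg (1 ⬝ᵥ ·) hxr
    rw [dotProduct_mulVec, (distLap_isHermitian ⊤).one_vecMul_eq_zero (distLap_mulVec_one ⊤),
      zero_dotProduct, dotProduct_smul, one_dotProduct, smul_eq_mul] at this
    exact this.symm
  refine or_iff_not_imp_left.mpr fun hr0 => ?_
  have hS : ∑ u, x u = 0 := (mul_eq_zero.mp hsum).resolve_left hr0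
  obtain ⟨u, hu⟩ := Function.ne_iff.mp hx
  have := congrFun hxr u
  rw [distLap_top_mulVec, hS] at this
  simp only [zero_smul, sub_zero, Pi.smul_apply, smul_eq_mul] at this
  exact (mul_right_cancel₀ hu this).symm

variable {G}

theorem dist_top_le_dist (hG : G.Connected) (u w : Fin n) :
    (⊤ : SimpleGraph (Fin n)).dist u w ≤ G.dist u w := by
  by_cases h : u = w
  · simp [h]
  · rw [SimpleGraph.dist_top_of_ne h]
    exact hG.pos_dist_of_ne h

theorem transm_top_le_transm (hG : G.Connected) (u : Fin n) :
    transm (⊤ : SimpleGraph (Fin n)) u ≤ transm G u :=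
  sum_le_sum fun w _ => by exact_mod_cast dist_top_le_dist hG u w

theorem eq_top_of_transm_le (hG : G.Connected) (h : ∀ u, transm G u ≤ n - 1) : G = ⊤ := by
  ext u w
  refine ⟨SimpleGraph.Adj.ne, fun hne => by_contra fun hadj => ?_⟩
  have hdist : 1 < G.dist u w := by
    have := hG.pos_dist_of_ne hne
    have := mt SimpleGraph.dist_eq_one_iff_adj.mp hadj
    omega
  have : transm (⊤ : SimpleGraph (Fin n)) u < transm G u :=
    sum_lt_sum (fun x _ => by exact_mod_cast dist_top_le_dist hG u x)
      ⟨w, mem_univ w, by rw [SimpleGraph.dist_top_of_ne hne]; exact_mod_cast hdist⟩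
  linarith [h u, transm_top u]

end DistanceLaplacian

namespace IsDLSpec

variable {n : ℕ} {G : SimpleGraph (Fin n)} {μ : Fin n → ℝ}

theorem spectrum_eq (hμ : IsDLSpec G μ) : spectrum ℝ (distLap G) = Set.range μ :=
  spectrum_eq_range_of_charpoly_eq_prod hμ

theorem sum_eq (hμ : IsDLSpec G μ) : ∑ i, μ i = 2 * wiener G := by
  rw [← trace_eq_sum_of_charpoly_eq_prod hμ, trace_distLap]

theorem nonneg (hμ : IsDLSpec G μ) (i : Fin n) : 0 ≤ μ i :=
  (posSemidef_iff_isHermitian_and_spectrum_nonneg.mp (distLap_posSemidef G)).2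
    (hμ.spectrum_eq ▸ Set.mem_range_self i)

theorem mul_transm_le (hμ : IsDLSpec G μ) (hmono : Antitone μ) (hn : 0 < n) (v : Fin n) :
    n * transm G v ≤ (n - 1) * μ ⟨0, hn⟩ := by
  have hmax : ∀ r ∈ spectrum ℝ (distLap G), r ≤ μ ⟨0, hn⟩ := by
    rw [hμ.spectrum_eq]
    rintro _ ⟨i, rfl⟩
    exact hmono (Nat.zero_le _)
  set x : Fin n → ℝ := Pi.single v (n : ℝ) - 1
  have hx : x ⬝ᵥ x = (n - 1) * n := by simp [x]
  have hq : x ⬝ᵥ distLap G *ᵥ x = n * transm G v * n := by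
    rw [(distLap_isHermitian G).dotProduct_mulVec_sub_one (distLap_mulVec_one G)]
    simp [distLap_apply_self]
  have := (distLap_isHermitian G).dotProduct_mulVec_le hmax x
  rw [hx, hq] at this
  exact le_of_mul_le_mul_right (by linarith) (by exact_mod_cast hn : (0 : ℝ) < n)

theorem eq_of_top (hμ : IsDLSpec (⊤ : SimpleGraph (Fin n)) μ) (hmono : Antitone μ)
    (hn : 2 ≤ n) {i : Fin n} (hi : i.val ≤ n - 2) : μ i = n := by
  have hval : ∀ k, μ k = 0 ∨ μ k = n := fun k =>
    eq_zero_or_eq_of_mem_spectrum_distLap_top (hμ.spectrum_eq ▸ Set.mem_range_self k)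
  have hn' : (2 : ℝ) ≤ n := by exact_mod_cast hn
  suffices h : μ ⟨n - 2, by omega⟩ = n by
    have := hmono (show i ≤ ⟨n - 2, by omega⟩ from hi)
    rcases hval i with h0 | h0 <;> linarith
  refine (hval _).resolve_left fun h0 => ?_
  set i : Fin n := ⟨n - 2, by omega⟩
  set j : Fin n := ⟨n - 1, by omega⟩
  have hij : i ≠ j := Fin.ne_of_val_ne (show n - 2 ≠ n - 1 by omega)
  have hj : μ j = 0 := le_antisymm (h0 ▸ hmono (show n - 2 ≤ n - 1 by omega)) (hμ.nonneg j)
  have hrest := sum_le_card_nsmul {i, j}ᶜ μ n fun k _ => by rcases hval k with h | h <;> linarith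
  rw [card_compl_pair hij, Fintype.card_fin, nsmul_eq_mul, Nat.cast_sub hn, Nat.cast_ofNat]
    at hrest
  have := sum_eq_add_add_sum_compl_pair μ hij
  rw [hμ.sum_eq, wiener_top, h0, hj] at this
  nlinarith

end IsDLSpec

theorem dls_lower_wiener_trMax (n : ℕ) (hn : 3 ≤ n) (G : SimpleGraph (Fin n))
    (hG : G.Connected) (μ : Fin n → ℝ) (hμ : IsDLSpec G μ) (hmono : Antitone μ) :
    (((n : ℝ) - 1) * (trMax G + 1) - 2 * wiener G) / ((n : ℝ) - 2)
      ≤ μ ⟨0, by omega⟩ - μ ⟨n - 2, by omega⟩ ∧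
    (μ ⟨0, by omega⟩ - μ ⟨n - 2, by omega⟩
        = (((n : ℝ) - 1) * (trMax G + 1) - 2 * wiener G) / ((n : ℝ) - 2) ↔ G = ⊤) := by
  have : Nonempty (Fin n) := ⟨⟨0, by omega⟩⟩
  obtain ⟨v, hv⟩ := exists_eq_ciSup_of_finite (f := transm G)
  have hTv : trMax G = transm G v := hv.symm
  have hT : (n : ℝ) - 1 ≤ trMax G := hTv ▸ transm_top v ▸ transm_top_le_transm hG v
  have hρ : n * trMax G ≤ (n - 1) * μ ⟨0, by omega⟩ := hTv ▸ hμ.mul_transm_le hmono _ v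
  have hsum : μ ⟨0, by omega⟩ + ((n : ℝ) - 2) * μ ⟨n - 2, by omega⟩ ≤ 2 * wiener G := by
    linarith [hmono.add_mul_le_sum (by omega), hμ.sum_eq, hμ.nonneg ⟨n - 1, by omega⟩]
  have hn2 : (0 : ℝ) < n - 2 := by
    have : (3 : ℝ) ≤ n := by exact_mod_cast hn
    linarith
  refine ⟨(div_le_iff₀ hn2).mpr (by linarith), fun heq => ?_, ?_⟩
  · have := (eq_div_iff hn2.ne').mp heq
    exact eq_top_of_transm_le hG fun u =>
      (le_ciSup (Finite.bddAbove_range _) u).trans (by linarith)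
  · rintro rfl
    rw [trMax_top (by omega), hμ.eq_of_top hmono (by omega) (Nat.zero_le _),
      hμ.eq_of_top hmono (by omega) le_rfl, wiener_top]
    ring
end

section
/- Let G be a connected simple graph on n vertices whose complement is disconnected, and let W(G) be its Wiener index. Then DLS(G) ≥ (2W(G) − n(n−1))/n, with equality if and only if G is the complete graph K_n. -/
open Finset Matrix Polynomial

/-!
The eigenvalues of `D^L(G)` sum to its trace `2W(G)`, and `2W(G) ≥ n(n-1)` for connected `G`,
with equality only for `K_n`. A vector `x` that is constant along the non-edges of `G` satisfies
`D^L x = n x - (∑ x) 𝟙`. This gives the eigenvalue `0` (for `𝟙`) and, when `S` is a component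
of the disconnected `Gᶜ`, the eigenvalue `n` for `n 𝟙_S - |S|`: every vertex of `S` is adjacent
in `G` to every vertex outside `S`. Hence `∂ₙ ≤ 0` and `∂ₙ₋₁ ≤ n`, and bounding the remaining eigenvalues
by `∂₁` gives `DLS(G) ≥ (2W(G) - n(n-1))/(n-1)`, which exceeds the claimed bound unless
`2W(G) = n(n-1)`. The spectrum of `K_n` is `n, …, n, 0`.
-/

namespace Matrix

variable {ι K : Type*} [Fintype ι] [DecidableEq ι] [Field K]

theorem isRoot_charpoly_iff_exists_mulVec_eq_smul (M : Matrix ι ι K) (r : K) :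
    M.charpoly.IsRoot r ↔ ∃ v ≠ 0, M *ᵥ v = r • v := by
  simp only [IsRoot.def, eval_charpoly, ← exists_mulVec_eq_zero_iff, sub_mulVec, sub_eq_zero]
  simp [eq_comm]

variable {M : Matrix ι ι K} {μ : ι → K}

theorem exists_mulVec_eq_smul_iff_of_charpoly_eq_prod (hμ : M.charpoly = ∏ i, (X - C (μ i)))
    (r : K) : (∃ v ≠ 0, M *ᵥ v = r • v) ↔ ∃ i, μ i = r := by
  rw [← isRoot_charpoly_iff_exists_mulVec_eq_smul, hμ, isRoot_prod]
  simp [sub_eq_zero, eq_comm]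

theorem trace_eq_sum_of_charpoly_eq_prod_s4 (hμ : M.charpoly = ∏ i, (X - C (μ i))) :
    M.trace = ∑ i, μ i := by
  rw [trace_eq_neg_charpoly_nextCoeff, hμ, prod_X_sub_C_nextCoeff, neg_neg]

end Matrix

theorem SimpleGraph.adj_of_reachable_compl_of_not_reachable_compl {V : Type*}
    {G : SimpleGraph V} {u x y : V} (hx : Gᶜ.Reachable u x) (hy : ¬Gᶜ.Reachable u y) :
    G.Adj x y := by
  by_contra h
  exact hy (hx.trans ((G.compl_adj x y).mpr ⟨fun hxy => hy (hxy ▸ hx), h⟩).reachable)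

section DistanceLaplacian

variable {n : ℕ}

theorem two_mul_wiener (G : SimpleGraph (Fin n)) : 2 * wiener G = ∑ v, transm G v := by
  rw [wiener]; ring

theorem trace_distLap_s4 (G : SimpleGraph (Fin n)) : (distLap G).trace = ∑ v, transm G v := by
  simp [Matrix.trace, distLap]

theorem distLap_mulVec_apply (G : SimpleGraph (Fin n)) (x : Fin n → ℝ) (a : Fin n) :
    (distLap G *ᵥ x) a = ∑ b, G.dist a b * (x a - x b) := by
  rw [distLap, sub_mulVec, Pi.sub_apply, mulVec_diagonal, transm, sum_mul, mulVec, dotProduct,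
    ← sum_sub_distrib]
  exact sum_congr rfl fun b _ => by simp only [of_apply]; ring

theorem distLap_mulVec_const (G : SimpleGraph (Fin n)) (c : ℝ) :
    distLap G *ᵥ (fun _ => c) = 0 := by
  ext a; simp [distLap_mulVec_apply]

theorem distLap_mulVec_of_ne_imp_adj {G : SimpleGraph (Fin n)} {x : Fin n → ℝ}
    (hx : ∀ a b, x a ≠ x b → G.Adj a b) :
    distLap G *ᵥ x = (n : ℝ) • x - fun _ => ∑ b, x b := by
  ext a
  have hterm : ∀ b, G.dist a b * (x a - x b) = x a - x b := fun b => by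
    by_cases h : x a = x b
    · simp [h]
    · simp [SimpleGraph.dist_eq_one_iff_adj.mpr (hx a b h)]
  simp [distLap_mulVec_apply, hterm, sum_sub_distrib]

theorem distLap_mulVec_eq_smul_of_not_connected_compl {G : SimpleGraph (Fin n)}
    (hne : Nonempty (Fin n)) (hc : ¬Gᶜ.Connected) :
    ∃ w ≠ 0, distLap G *ᵥ w = (n : ℝ) • w := by
  classical
  obtain ⟨u, v, huv⟩ : ∃ u v, ¬Gᶜ.Reachable u v := by
    by_contra! h
    exact hc ((SimpleGraph.connected_iff _).mpr ⟨h, hne⟩)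
  set s : ℝ := ((#{a | Gᶜ.Reachable u a} : ℕ) : ℝ)
  have hs : 1 ≤ s := by
    simpa [s] using Finset.card_pos.mpr ⟨u, mem_filter.mpr ⟨mem_univ u, .refl u⟩⟩
  let w : Fin n → ℝ := fun a => n * (if Gᶜ.Reachable u a then 1 else 0) - s
  have hw_sum : ∑ a, w a = 0 := by
    simp only [w, s, sum_sub_distrib, ← mul_sum, sum_boole, sum_const, card_univ,
      Fintype.card_fin, nsmul_eq_mul, sub_self]
  have hw_adj : ∀ a b, w a ≠ w b → G.Adj a b := by
    intro a b hab
    by_cases ha : Gᶜ.Reachable u a <;> by_cases hb : Gᶜ.Reachable u b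
    · simp [w, ha, hb] at hab
    · exact SimpleGraph.adj_of_reachable_compl_of_not_reachable_compl ha hb
    · exact (SimpleGraph.adj_of_reachable_compl_of_not_reachable_compl hb ha).symm
    · simp [w, ha, hb] at hab
  refine ⟨w, fun h => ?_, ?_⟩
  · have hv := congrFun h v
    simp only [w, huv, if_false, mul_zero, zero_sub, Pi.zero_apply, neg_eq_zero] at hv
    linarith
  · rw [distLap_mulVec_of_ne_imp_adj hw_adj, hw_sum]
    ext a; simp

theorem eq_zero_or_eq_of_distLap_top_mulVec_eq_smul {x : Fin n → ℝ} (hx : x ≠ 0) {r : ℝ}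
    (h : distLap ⊤ *ᵥ x = r • x) : r = 0 ∨ r = n := by
  rw [distLap_mulVec_of_ne_imp_adj fun a b hab =>
    (SimpleGraph.top_adj a b).mpr fun h => hab (h ▸ rfl)] at h
  have hsum : r * ∑ a, x a = 0 := by
    have := congrArg (fun y => ∑ a, y a) h
    simp only [Pi.sub_apply, Pi.smul_apply, smul_eq_mul, sum_sub_distrib, ← mul_sum, sum_const,
      card_univ, Fintype.card_fin, nsmul_eq_mul] at this
    linarith
  rcases mul_eq_zero.mp hsum with hr | hx_sum
  · exact .inl hr
  · refine .inr (smul_left_injective ℝ hx ?_).symm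
    simpa [hx_sum, ← Pi.zero_def] using h

theorem isDLSpec_top_apply_le {μ : Fin n → ℝ} (hμ : IsDLSpec ⊤ μ) (i : Fin n) : μ i ≤ n := by
  obtain ⟨x, hx, hxi⟩ :=
    (Matrix.exists_mulVec_eq_smul_iff_of_charpoly_eq_prod hμ (μ i)).mpr ⟨i, rfl⟩
  rcases eq_zero_or_eq_of_distLap_top_mulVec_eq_smul hx hxi with h | h <;> rw [h]
  positivity

theorem transm_sub_eq_sum (G : SimpleGraph (Fin n)) (v : Fin n) :
    transm G v - (n - 1) = ∑ u ∈ univ.erase v, ((G.dist v u : ℝ) - 1) := by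
  rw [sum_sub_distrib, sum_const, card_erase_of_mem (mem_univ v), card_univ, Fintype.card_fin,
    transm, ← add_sum_erase _ _ (mem_univ v)]
  simp [Nat.cast_sub (Fin.pos v)]

private theorem mul_sub_one_eq_sum : (n : ℝ) * (n - 1) = ∑ _v : Fin n, ((n : ℝ) - 1) := by
  rw [sum_const, card_univ, Fintype.card_fin, nsmul_eq_mul]

namespace SimpleGraph.Connected

variable {G : SimpleGraph (Fin n)}

theorem dist_sub_one_nonneg (hG : G.Connected) {u v : Fin n} (h : u ≠ v) :
    0 ≤ (G.dist u v : ℝ) - 1 :=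
  sub_nonneg.mpr <| by exact_mod_cast hG.pos_dist_of_ne h

theorem sub_one_le_transm (hG : G.Connected) (v : Fin n) : (n : ℝ) - 1 ≤ transm G v := by
  have hnonneg : 0 ≤ ∑ u ∈ univ.erase v, ((G.dist v u : ℝ) - 1) :=
    sum_nonneg fun _ hu => hG.dist_sub_one_nonneg (ne_of_mem_erase hu).symm
  linarith [transm_sub_eq_sum G v]

theorem transm_eq_iff_isUniversal (hG : G.Connected) (v : Fin n) :
    transm G v = n - 1 ↔ G.IsUniversal v := by
  rw [← sub_eq_zero, transm_sub_eq_sum, sum_eq_zero_iff_of_nonneg]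
  · simp only [mem_erase, mem_univ, and_true, sub_eq_zero, Nat.cast_eq_one,
      SimpleGraph.dist_eq_one_iff_adj]
    exact ⟨fun h w hw => h w hw.symm, fun h u hu => h hu.symm⟩
  · exact fun _ hu => hG.dist_sub_one_nonneg (ne_of_mem_erase hu).symm

theorem mul_sub_one_le_sum_transm (hG : G.Connected) : (n : ℝ) * (n - 1) ≤ ∑ v, transm G v :=
  mul_sub_one_eq_sum.trans_le (sum_le_sum fun v _ => hG.sub_one_le_transm v)

theorem sum_transm_eq_iff (hG : G.Connected) : ∑ v, transm G v = n * (n - 1) ↔ G = ⊤ := by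
  rw [mul_sub_one_eq_sum, eq_comm, sum_eq_sum_iff_of_le fun v _ => hG.sub_one_le_transm v,
    SimpleGraph.eq_top_iff_forall_isUniversal]
  simp [eq_comm, hG.transm_eq_iff_isUniversal]

end SimpleGraph.Connected

end DistanceLaplacian

section Spread

variable {m : ℕ}

def spread (μ : Fin (m + 2) → ℝ) : ℝ :=
  μ 0 - μ (Fin.last m).castSucc

variable {μ : Fin (m + 2) → ℝ}

theorem Antitone.sum_le (hμ : Antitone μ) :
    ∑ i, μ i ≤ m * μ 0 + μ (Fin.last m).castSucc + μ (Fin.last (m + 1)) := by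
  rw [Fin.sum_univ_castSucc, Fin.sum_univ_castSucc]
  have hhead : ∑ i : Fin m, μ i.castSucc.castSucc ≤ ∑ _i : Fin m, μ 0 :=
    sum_le_sum fun i _ => hμ (Fin.zero_le _)
  rw [sum_const, card_univ, Fintype.card_fin, nsmul_eq_mul] at hhead
  simpa using hhead

theorem Antitone.apply_castSucc_last_le (hμ : Antitone μ) {i j : Fin (m + 2)} (h : μ j < μ i) :
    μ (Fin.last m).castSucc ≤ μ i := by
  have hij : i < j := lt_of_not_ge fun hji => h.not_ge (hμ hji)
  exact hμ (Fin.le_def.mpr (by simp only [Fin.val_castSucc, Fin.val_last]; omega))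

theorem Antitone.le_spread (hμ : Antitone μ) {j₀ j₁ : Fin (m + 2)} (h₀ : μ j₀ = 0)
    (h₁ : μ j₁ = m + 2) (hT : (m + 2) * (m + 2 - 1) ≤ ∑ i, μ i) :
    (∑ i, μ i - (m + 2) * (m + 2 - 1)) / (m + 2) ≤ spread μ ∧
      (spread μ = (∑ i, μ i - (m + 2) * (m + 2 - 1)) / (m + 2) →
        ∑ i, μ i = (m + 2) * (m + 2 - 1)) := by
  have hsum := hμ.sum_le
  have hlast : μ (Fin.last (m + 1)) ≤ 0 := h₀ ▸ hμ (Fin.le_last j₀)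
  have hpen : μ (Fin.last m).castSucc ≤ m + 2 :=
    h₁ ▸ hμ.apply_castSucc_last_le (by rw [h₀, h₁]; positivity)
  have hpen0 : μ (Fin.last m).castSucc ≤ μ 0 := hμ (Fin.zero_le _)
  set s := ∑ i, μ i - (m + 2) * (m + 2 - 1)
  have hs : 0 ≤ s := by linarith
  have hkey : s / (m + 1) ≤ spread μ := by
    rw [spread, div_le_iff₀ (by positivity)]
    nlinarith [mul_le_mul_of_nonneg_left hpen (Nat.cast_nonneg m : (0 : ℝ) ≤ m)]
  refine ⟨(div_le_div_of_nonneg_left hs (by positivity) (by linarith)).trans hkey, fun heq => ?_⟩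
  by_contra hne
  have hlt : s / (m + 2) < s / (m + 1) :=
    div_lt_div_of_pos_left (lt_of_le_of_ne hs (Ne.symm (sub_ne_zero.mpr hne))) (by positivity)
      (by linarith)
  linarith

theorem Antitone.spread_eq_zero (hμ : Antitone μ) {j₀ : Fin (m + 2)} (h₀ : μ j₀ = 0)
    (hle : ∀ i, μ i ≤ m + 2) (hT : ∑ i, μ i = (m + 2) * (m + 2 - 1)) :
    spread μ = 0 := by
  have hsum := hμ.sum_le
  have hlast : μ (Fin.last (m + 1)) ≤ 0 := h₀ ▸ hμ (Fin.le_last j₀)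
  have hpen0 : μ (Fin.last m).castSucc ≤ μ 0 := hμ (Fin.zero_le _)
  have hle0 := hle 0
  rw [spread]
  nlinarith [mul_le_mul_of_nonneg_left hle0 (Nat.cast_nonneg m : (0 : ℝ) ≤ m)]

end Spread

theorem dls_lower_wiener_complement_disconnected (n : ℕ) (G : SimpleGraph (Fin n))
    (hG : G.Connected) (hc : ¬ Gᶜ.Connected)
    (μ : Fin n → ℝ) (hμ : IsDLSpec G μ) (hmono : Antitone μ) :
    (2 * wiener G - n * ((n : ℝ) - 1)) / n ≤ μ ⟨0, by have h0 : 0 < n := Fin.pos_iff_nonempty.mpr hG.nonempty; omega⟩ - μ ⟨n - 2, by have h0 : 0 < n := Fin.pos_iff_nonempty.mpr hG.nonempty; omega⟩ ∧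
    (μ ⟨0, by have h0 : 0 < n := Fin.pos_iff_nonempty.mpr hG.nonempty; omega⟩ - μ ⟨n - 2, by have h0 : 0 < n := Fin.pos_iff_nonempty.mpr hG.nonempty; omega⟩ = (2 * wiener G - n * ((n : ℝ) - 1)) / n ↔ G = ⊤) := by
  have hspec := Matrix.exists_mulVec_eq_smul_iff_of_charpoly_eq_prod hμ
  obtain ⟨j₀, hj₀⟩ := (hspec 0).mp
    ⟨fun _ => 1, fun h => by simpa using congrFun h hG.nonempty.some, by simp [distLap_mulVec_const]⟩
  obtain ⟨j₁, hj₁⟩ := (hspec n).mp (distLap_mulVec_eq_smul_of_not_connected_compl hG.nonempty hc)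
  have htrace : ∑ i, μ i = 2 * wiener G := by
    rw [two_mul_wiener, ← trace_distLap_s4, Matrix.trace_eq_sum_of_charpoly_eq_prod_s4 hμ]
  obtain ⟨m, rfl⟩ : ∃ m, n = m + 2 := by
    have hne : j₀ ≠ j₁ := fun h =>
      (Fin.pos j₀).ne' (by exact_mod_cast hj₁.symm.trans (h ▸ hj₀))
    exact ⟨n - 2, by have := Fin.val_ne_of_ne hne; omega⟩
  have hb : ∀ h, (⟨m + 2 - 2, h⟩ : Fin (m + 2)) = (Fin.last m).castSucc :=
    fun _ => Fin.ext (by simp)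
  simp only [Fin.zero_eta, hb, ← htrace]
  push_cast at hj₁ ⊢
  obtain ⟨hle, heq⟩ := hmono.le_spread hj₀ hj₁ (by
    rw [htrace, two_mul_wiener]; exact_mod_cast hG.mul_sub_one_le_sum_transm)
  refine ⟨hle, fun h => hG.sum_transm_eq_iff.mp ?_, ?_⟩
  · rw [← two_mul_wiener, ← htrace, heq h]; push_cast; ring
  · rintro rfl
    have hT : ∑ i, μ i = (m + 2) * (m + 2 - 1) := by
      rw [htrace, two_mul_wiener, hG.sum_transm_eq_iff.mpr rfl]; push_cast; ring
    have hle_top : ∀ i, μ i ≤ m + 2 := fun i => by exact_mod_cast isDLSpec_top_apply_le hμ i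
    change spread μ = _
    rw [hmono.spread_eq_zero hj₀ hle_top hT, hT, sub_self, zero_div]
end

section
/- Let G be a connected simple graph on n ≥ 4 vertices with chromatic number χ satisfying n/2 ≤ χ ≤ n−1, and suppose the complement of G is disconnected. Then DLS(G) ≥ 2, with equality if and only if G is the complete multipartite graph K_{2,…,2,1,…,1} having n−χ independent classes of size 2 and 2χ−n independent classes of size 1. -/
open Finset Matrix Polynomial

/-!
When `Gᶜ` is disconnected, a vertex outside the `Gᶜ`-component of `u` is `G`-adjacent to that
whole component, so `G` has diameter at most two and `D^L(G) = nI - J + L(Gᶜ)`, i.e.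
`xᵀ D^L x = n‖x‖² - (∑ x)² + xᵀ L(Gᶜ) x`. This form is at least `n‖x‖²` on `1^⊥` and at most
`n‖x‖²` on `ker L(Gᶜ)`, whose dimension is the number of components of `Gᶜ`, hence at least two;
by min–max, `∂_{n-1} = n`. For `∂_1`, the test vector `e_u - e_v` on an edge `uv` of `Gᶜ` gives
`∂_1 ≥ n + 1 + (deg u + deg v) / 2 ≥ n + 2`, with equality forcing `Gᶜ` to be a matching;
conversely `xᵀ L x ≤ 2Δ‖x‖²` gives `∂_1 ≤ n + 2` when it is one. Finally, `Gᶜ` is a matching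
exactly when `G` is complete multipartite with parts of size one or two, and then there are
`χ` parts.
-/

lemma Matrix.exists_mem_ne_zero_forall_dotProduct_eq_zero {K ι κ : Type*} [Field K] [Fintype ι]
    [Fintype κ] (v : κ → ι → K) (W : Submodule K (ι → K))
    (h : Fintype.card κ < Module.finrank K W) :
    ∃ x ∈ W, x ≠ 0 ∧ ∀ k, v k ⬝ᵥ x = 0 := by
  let f : W →ₗ[K] κ → K := (LinearMap.pi fun k => dotProductBilin K K (v k)) ∘ₗ W.subtype
  obtain ⟨⟨x, hxW⟩, hx, hx0⟩ :=
    Submodule.exists_mem_ne_zero_of_ne_bot (f.ker_ne_bot_of_finrank_lt (by simpa using h))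
  exact ⟨x, hxW, fun h0 => hx0 (by simp [h0]), fun k => congrFun hx k⟩

lemma Polynomial.roots_prod_univ_X_sub_C {ι R : Type*} [Fintype ι] [CommRing R] [IsDomain R]
    (f : ι → R) : (∏ i, (X - C (f i))).roots = univ.val.map f := by
  rw [prod_eq_multiset_prod, ← roots_multiset_prod_X_sub_C (univ.val.map f), Multiset.map_map]
  rfl

namespace Matrix.IsHermitian

variable {ι : Type*} [Fintype ι] [DecidableEq ι] {A : Matrix ι ι ℝ}

section

variable (hA : A.IsHermitian)

lemma sum_dotProduct_smul_eigenvectorBasis (x : ι → ℝ) :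
    ∑ i, (⇑(hA.eigenvectorBasis i) ⬝ᵥ x) • ⇑(hA.eigenvectorBasis i) = x := by
  have h := congrArg WithLp.ofLp (hA.eigenvectorBasis.sum_repr' (WithLp.toLp 2 x))
  simpa [EuclideanSpace.inner_eq_star_dotProduct, dotProduct_comm] using h

lemma exists_dotProduct_eigenvectorBasis_ne_zero {x : ι → ℝ} (hx : x ≠ 0) :
    ∃ i, ⇑(hA.eigenvectorBasis i) ⬝ᵥ x ≠ 0 := by
  by_contra! h
  exact hx (by simpa [h] using (hA.sum_dotProduct_smul_eigenvectorBasis x).symm)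

lemma dotProduct_self_eq_sum (x : ι → ℝ) :
    x ⬝ᵥ x = ∑ i, (⇑(hA.eigenvectorBasis i) ⬝ᵥ x) ^ 2 := by
  nth_rw 1 [← hA.sum_dotProduct_smul_eigenvectorBasis x]
  simp [sum_dotProduct, sq]

lemma dotProduct_mulVec_self_eq_sum (x : ι → ℝ) :
    x ⬝ᵥ (A *ᵥ x) = ∑ i, hA.eigenvalues i * (⇑(hA.eigenvectorBasis i) ⬝ᵥ x) ^ 2 := by
  nth_rw 2 [← hA.sum_dotProduct_smul_eigenvectorBasis x]
  simp only [mulVec_sum, mulVec_smul, mulVec_eigenvectorBasis, dotProduct_sum, dotProduct_smul,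
    smul_eq_mul]
  exact sum_congr rfl fun i _ => by rw [dotProduct_comm x]; ring

lemma dotProduct_mulVec_self_sub_eq_sum (x : ι → ℝ) (c : ℝ) :
    x ⬝ᵥ (A *ᵥ x) - c * (x ⬝ᵥ x)
      = ∑ i, (hA.eigenvalues i - c) * (⇑(hA.eigenvectorBasis i) ⬝ᵥ x) ^ 2 := by
  simp only [hA.dotProduct_mulVec_self_eq_sum, hA.dotProduct_self_eq_sum, mul_sum,
    ← sum_sub_distrib, sub_mul]

lemma forall_eigenvalues_le_iff (c : ℝ) :
    (∀ i, hA.eigenvalues i ≤ c) ↔ ∀ x, x ⬝ᵥ (A *ᵥ x) ≤ c * (x ⬝ᵥ x) := by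
  constructor
  · intro h x
    rw [← sub_nonpos, hA.dotProduct_mulVec_self_sub_eq_sum]
    exact sum_nonpos fun i _ => mul_nonpos_of_nonpos_of_nonneg (by linarith [h i]) (sq_nonneg _)
  · intro h i
    have hb : ⇑(hA.eigenvectorBasis i) ⬝ᵥ ⇑(hA.eigenvectorBasis i) = 1 :=
      hA.eigenvectorBasis.inner_eq_one i
    simpa [mulVec_eigenvectorBasis, hb] using h (hA.eigenvectorBasis i)

lemma exists_mem_dotProduct_eigenvectorBasis_eq_zero (W : Submodule ℝ (ι → ℝ)) (p : ℝ → Prop)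
    [DecidablePred p] (h : #{i | p (hA.eigenvalues i)} < Module.finrank ℝ W) :
    ∃ x ∈ W, ∃ j, ¬ p (hA.eigenvalues j) ∧ ⇑(hA.eigenvectorBasis j) ⬝ᵥ x ≠ 0 ∧
      ∀ i, p (hA.eigenvalues i) → ⇑(hA.eigenvectorBasis i) ⬝ᵥ x = 0 := by
  obtain ⟨x, hxW, hx0, hx⟩ := exists_mem_ne_zero_forall_dotProduct_eq_zero
    (fun i : {i // p (hA.eigenvalues i)} => ⇑(hA.eigenvectorBasis i)) W
    (by rwa [Fintype.card_subtype])
  obtain ⟨j, hj⟩ := hA.exists_dotProduct_eigenvectorBasis_ne_zero hx0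
  exact ⟨x, hxW, j, fun hpj => hj (hx ⟨j, hpj⟩), hj, fun i hi => hx ⟨i, hi⟩⟩

lemma finrank_le_card_eigenvalues_le (W : Submodule ℝ (ι → ℝ)) (c : ℝ)
    (hW : ∀ x ∈ W, x ⬝ᵥ (A *ᵥ x) ≤ c * (x ⬝ᵥ x)) :
    Module.finrank ℝ W ≤ #{i | hA.eigenvalues i ≤ c} := by
  by_contra! hlt
  obtain ⟨x, hxW, j, hj, hxj, hx⟩ := hA.exists_mem_dotProduct_eigenvectorBasis_eq_zero W (· ≤ c) hlt
  have hpos : 0 < x ⬝ᵥ (A *ᵥ x) - c * (x ⬝ᵥ x) := by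
    rw [hA.dotProduct_mulVec_self_sub_eq_sum]
    refine sum_pos' (fun i _ => ?_)
      ⟨j, mem_univ j, mul_pos (by linarith [not_le.1 hj]) (by positivity)⟩
    by_cases hi : hA.eigenvalues i ≤ c
    · simp [hx i hi]
    · exact mul_nonneg (by linarith [not_le.1 hi]) (sq_nonneg _)
  linarith [hW x hxW]

lemma finrank_le_card_le_eigenvalues (W : Submodule ℝ (ι → ℝ)) (c : ℝ)
    (hW : ∀ x ∈ W, c * (x ⬝ᵥ x) ≤ x ⬝ᵥ (A *ᵥ x)) :
    Module.finrank ℝ W ≤ #{i | c ≤ hA.eigenvalues i} := by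
  by_contra! hlt
  obtain ⟨x, hxW, j, hj, hxj, hx⟩ := hA.exists_mem_dotProduct_eigenvectorBasis_eq_zero W (c ≤ ·) hlt
  have hneg : x ⬝ᵥ (A *ᵥ x) - c * (x ⬝ᵥ x) < 0 := by
    rw [hA.dotProduct_mulVec_self_sub_eq_sum]
    refine sum_neg' (fun i _ => ?_)
      ⟨j, mem_univ j, mul_neg_of_neg_of_pos (by linarith [not_le.1 hj]) (by positivity)⟩
    by_cases hi : c ≤ hA.eigenvalues i
    · simp [hx i hi]
    · exact mul_nonpos_of_nonpos_of_nonneg (by linarith [not_le.1 hi]) (sq_nonneg _)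
  linarith [hW x hxW]

end

variable {μ : ι → ℝ}

lemma map_univ_val_eq_of_charpoly_eq (hA : A.IsHermitian)
    (hμ : A.charpoly = ∏ i, (X - C (μ i))) : univ.val.map μ = univ.val.map hA.eigenvalues := by
  have h := hA.charpoly_eq
  simp only [RCLike.ofReal_real_eq_id, id] at h
  rw [← roots_prod_univ_X_sub_C, ← roots_prod_univ_X_sub_C, ← hμ, h]

lemma card_filter_eq_of_charpoly_eq (hA : A.IsHermitian) (hμ : A.charpoly = ∏ i, (X - C (μ i)))
    (p : ℝ → Prop) [DecidablePred p] : #{i | p (μ i)} = #{i | p (hA.eigenvalues i)} := by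
  have h := congrArg (Multiset.countP p) (hA.map_univ_val_eq_of_charpoly_eq hμ)
  rwa [Multiset.countP_map, Multiset.countP_map] at h

lemma forall_le_iff_of_charpoly_eq (hA : A.IsHermitian) (hμ : A.charpoly = ∏ i, (X - C (μ i)))
    (c : ℝ) : (∀ i, μ i ≤ c) ↔ ∀ x, x ⬝ᵥ (A *ᵥ x) ≤ c * (x ⬝ᵥ x) := by
  have hmem : ∀ f : ι → ℝ, (∀ i, f i ≤ c) ↔ ∀ a ∈ univ.val.map f, a ≤ c := fun f => by simp
  rw [← hA.forall_eigenvalues_le_iff, hmem, hmem, hA.map_univ_val_eq_of_charpoly_eq hμ]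

end Matrix.IsHermitian

lemma Matrix.single_sub_single_dotProduct_self {ι : Type*} [Fintype ι] [DecidableEq ι] {u v : ι}
    (huv : u ≠ v) :
    (Pi.single u 1 - Pi.single v 1 : ι → ℝ) ⬝ᵥ (Pi.single u 1 - Pi.single v 1) = 2 := by
  simp [huv, huv.symm, one_add_one_eq_two]

namespace Antitone

variable {α : Type*} [LinearOrder α] {n : ℕ} {μ : Fin n → α}

lemma le_apply_of_le_card (hμ : Antitone μ) {c : α} (k : Fin n)
    (h : (k : ℕ) + 1 ≤ #{j | c ≤ μ j}) : c ≤ μ k := by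
  obtain ⟨j, hj, hjk⟩ := exists_mem_notMem_of_card_lt_card (s := Iio k) (t := {j | c ≤ μ j})
    (by rw [Fin.card_Iio]; omega)
  simp only [mem_filter, mem_univ, true_and, mem_Iio, not_lt] at hj hjk
  exact hj.trans (hμ hjk)

lemma apply_le_of_le_card (hμ : Antitone μ) {c : α} (k : Fin n)
    (h : n - k ≤ #{j | μ j ≤ c}) : μ k ≤ c := by
  obtain ⟨j, hj, hjk⟩ := exists_mem_notMem_of_card_lt_card (s := Ioi k) (t := {j | μ j ≤ c})
    (by rw [Fin.card_Ioi]; omega)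
  simp only [mem_filter, mem_univ, true_and, mem_Ioi, not_lt] at hj hjk
  exact (hμ hjk).trans hj

end Antitone

namespace SimpleGraph

variable {V : Type*}

lemma dist_eq_two_of_compl_adj [Nonempty V] {G : SimpleGraph V} (hc : ¬Gᶜ.Connected) {u v : V}
    (huv : Gᶜ.Adj u v) : G.dist u v = 2 := by
  obtain ⟨z, hz⟩ : ∃ z, ¬Gᶜ.Reachable u z := by
    by_contra! h
    exact hc ⟨fun a b => (h a).symm.trans (h b)⟩
  have hadj_z : ∀ w, Gᶜ.Reachable u w → G.Adj w z := fun w hw => by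
    by_contra hwz
    have hwz' : w ≠ z := by rintro rfl; exact hz hw
    exact hz (hw.trans ((compl_adj G w z).2 ⟨hwz', hwz⟩).reachable)
  have huz := hadj_z u .rfl
  have hzv := (hadj_z v huv.reachable).symm
  have hle : G.dist u v ≤ 2 := G.dist_le (.cons huz (.cons hzv .nil))
  have h0 : G.dist u v ≠ 0 := fun h =>
    huv.ne ((huz.reachable.trans hzv.reachable).dist_eq_zero_iff.1 h)
  have h1 : G.dist u v ≠ 1 := fun h => ((compl_adj G u v).1 huv).2 (dist_eq_one_iff_adj.1 h)
  omega

lemma of_dist_eq_of_not_connected_compl [DecidableEq V] [Nonempty V] {G : SimpleGraph V}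
    [DecidableRel G.Adj] (hc : ¬Gᶜ.Connected) :
    of (fun u v => (G.dist u v : ℝ)) = of (fun _ _ => 1) - 1 + Gᶜ.adjMatrix ℝ := by
  ext u v
  by_cases huv : u = v
  · simp [huv]
  by_cases hadj : G.Adj u v
  · simp [huv, hadj, dist_eq_one_iff_adj.2 hadj]
  · have hc_adj : Gᶜ.Adj u v := (compl_adj G u v).2 ⟨huv, hadj⟩
    simp [huv, hc_adj, dist_eq_two_of_compl_adj hc hc_adj, one_add_one_eq_two]

lemma exists_compl_adj_of_chromaticNumber_lt [Fintype V] {G : SimpleGraph V}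
    (h : G.chromaticNumber < Fintype.card V) : ∃ u v, Gᶜ.Adj u v := by
  by_contra! hno
  have hG : G = ⊤ := by
    ext u v
    simp only [top_adj]
    exact ⟨G.ne_of_adj, fun huv => by simpa [compl_adj, huv] using hno u v⟩
  rw [hG, chromaticNumber_top] at h
  exact lt_irrefl _ h

lemma two_le_finrank_ker_lapMatrix [Fintype V] [DecidableEq V] [Nonempty V] (H : SimpleGraph V)
    [DecidableRel H.Adj] (h : ¬H.Connected) :
    2 ≤ Module.finrank ℝ (LinearMap.ker (toLin' (H.lapMatrix ℝ))) := by
  rw [← card_connectedComponent_eq_finrank_ker_toLin'_lapMatrix]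
  by_contra! h1
  have : Subsingleton H.ConnectedComponent := Fintype.card_le_one_iff_subsingleton.1 (by omega)
  exact h ⟨fun u v => ConnectedComponent.exact (Subsingleton.elim _ _)⟩

variable [Fintype V] [DecidableEq V] (H : SimpleGraph V) [DecidableRel H.Adj]

lemma dotProduct_lapMatrix_mulVec_single_sub_single {u v : V} (huv : H.Adj u v) :
    (Pi.single u 1 - Pi.single v 1) ⬝ᵥ
      (H.lapMatrix ℝ *ᵥ (Pi.single u 1 - Pi.single v 1)) = H.degree u + H.degree v + 2 := by
  simp only [lapMatrix, degMatrix, mulVec_sub, mulVec_single, MulOpposite.op_one, one_smul,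
    dotProduct_sub, sub_dotProduct, single_dotProduct, col_apply, Matrix.sub_apply,
    diagonal_apply_eq, diagonal_apply_ne _ huv.ne, diagonal_apply_ne _ huv.ne.symm, adjMatrix_apply,
    H.irrefl, huv, huv.symm, if_true, if_false, sub_zero, zero_sub]
  ring

lemma dotProduct_lapMatrix_mulVec_le {d : ℕ} (hd : ∀ v, H.degree v ≤ d) (x : V → ℝ) :
    x ⬝ᵥ (H.lapMatrix ℝ *ᵥ x) ≤ 2 * d * (x ⬝ᵥ x) := by
  have hswap : ∑ i, ∑ j, (if H.Adj i j then x j ^ 2 else 0) = ∑ i, H.degree i * x i ^ 2 := by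
    rw [sum_comm]
    simp_rw [H.adj_comm _ _, H.degree_eq_sum_if_adj (R := ℝ), sum_mul, ite_mul, one_mul, zero_mul]
  have hdeg : ∑ i, ∑ j, (if H.Adj i j then x i ^ 2 else 0) = ∑ i, H.degree i * x i ^ 2 := by
    simp_rw [H.degree_eq_sum_if_adj (R := ℝ), sum_mul, ite_mul, one_mul, zero_mul]
  calc x ⬝ᵥ (H.lapMatrix ℝ *ᵥ x)
      = (∑ i, ∑ j, if H.Adj i j then (x i - x j) ^ 2 else 0) / 2 := by
        rw [← toLinearMap₂'_apply', lapMatrix_toLinearMap₂']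
    _ ≤ ∑ i, ∑ j, ((if H.Adj i j then x i ^ 2 else 0) + (if H.Adj i j then x j ^ 2 else 0)) := by
        rw [div_le_iff₀ two_pos, sum_mul]
        refine sum_le_sum fun i _ => ?_
        rw [sum_mul]
        refine sum_le_sum fun j _ => ?_
        split_ifs
        · nlinarith [sq_nonneg (x i + x j)]
        · simp
    _ = 2 * ∑ i, H.degree i * x i ^ 2 := by
        simp_rw [sum_add_distrib, hswap, hdeg]; ring
    _ ≤ 2 * ∑ i, (d : ℝ) * x i ^ 2 := by
        gcongr with i
        exact_mod_cast hd i
    _ = 2 * d * (x ⬝ᵥ x) := by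
        simp only [dotProduct, mul_sum, sq, mul_assoc]

end SimpleGraph

open SimpleGraph

section distLap

variable {n : ℕ}

lemma isHermitian_distLap (G : SimpleGraph (Fin n)) : (distLap G).IsHermitian := by
  ext u v
  by_cases huv : u = v
  · simp [huv]
  · simp [distLap, huv, Ne.symm huv, dist_comm]

variable [NeZero n] {G : SimpleGraph (Fin n)} [DecidableRel G.Adj]

lemma distLap_eq_of_not_connected_compl (hc : ¬Gᶜ.Connected) :
    distLap G = (n : ℝ) • 1 - of (fun _ _ => 1) + Gᶜ.lapMatrix ℝ := by
  have htransm : transm G = fun v => n - 1 + (Gᶜ.degree v : ℝ) := by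
    ext v
    change ∑ u, of (fun u v => (G.dist u v : ℝ)) v u = _
    rw [of_dist_eq_of_not_connected_compl hc]
    simp only [Matrix.add_apply, Matrix.sub_apply, of_apply, one_apply, adjMatrix_apply,
      sum_add_distrib, sum_sub_distrib, ← degree_eq_sum_if_adj, sum_ite_eq, mem_univ, if_true,
      sum_const, card_univ, Fintype.card_fin, nsmul_eq_mul, mul_one]
  rw [distLap, of_dist_eq_of_not_connected_compl hc, htransm, lapMatrix, degMatrix]
  ext u v
  by_cases huv : u = v
  · subst huv; simp
  · simp only [Matrix.add_apply, Matrix.sub_apply, Matrix.smul_apply, of_apply,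
      diagonal_apply_ne _ huv, one_apply_ne huv, adjMatrix_apply, compl_adj, ne_eq, huv,
      not_false_eq_true, true_and, ite_not, smul_eq_mul, mul_zero]
    ring

lemma dotProduct_distLap_mulVec (hc : ¬Gᶜ.Connected) (x : Fin n → ℝ) :
    x ⬝ᵥ (distLap G *ᵥ x) = n * (x ⬝ᵥ x) - (∑ i, x i) ^ 2 + x ⬝ᵥ (Gᶜ.lapMatrix ℝ *ᵥ x) := by
  have hJ : (of fun _ _ => 1 : Matrix (Fin n) (Fin n) ℝ) *ᵥ x = fun _ => ∑ i, x i := by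
    ext; simp [mulVec, dotProduct]
  rw [distLap_eq_of_not_connected_compl hc, add_mulVec, sub_mulVec, smul_mulVec, one_mulVec, hJ,
    dotProduct_add, dotProduct_sub, dotProduct_smul, smul_eq_mul, sq]
  congr 2
  simp [dotProduct, sum_mul]

lemma dotProduct_distLap_mulVec_single_sub_single (hc : ¬Gᶜ.Connected) {u v : Fin n}
    (huv : Gᶜ.Adj u v) :
    (Pi.single u 1 - Pi.single v 1) ⬝ᵥ (distLap G *ᵥ (Pi.single u 1 - Pi.single v 1))
      = 2 * n + Gᶜ.degree u + Gᶜ.degree v + 2 := by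
  rw [dotProduct_distLap_mulVec hc, dotProduct_lapMatrix_mulVec_single_sub_single _ huv]
  simp only [dotProduct_sub, dotProduct_single, Pi.sub_apply, Pi.single_eq_same,
    Pi.single_eq_of_ne huv.ne, Pi.single_eq_of_ne huv.ne.symm, sum_sub_distrib, sum_pi_single',
    mem_univ, if_true, sub_self, sub_zero, zero_sub, mul_one]
  ring

lemma two_mul_add_degree_add_degree_le (hc : ¬Gᶜ.Connected) {c : ℝ}
    (h : ∀ x, x ⬝ᵥ (distLap G *ᵥ x) ≤ c * (x ⬝ᵥ x)) {u v : Fin n} (huv : Gᶜ.Adj u v) :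
    2 * n + Gᶜ.degree u + Gᶜ.degree v + 2 ≤ 2 * c := by
  have := h (Pi.single u 1 - Pi.single v 1)
  rw [dotProduct_distLap_mulVec_single_sub_single hc huv,
    single_sub_single_dotProduct_self huv.ne] at this
  linarith

lemma le_card_le_eigenvalues_distLap (hc : ¬Gᶜ.Connected) :
    n - 1 ≤ #{i | (n : ℝ) ≤ (isHermitian_distLap G).eigenvalues i} := by
  let sumFun := dotProductBilin ℝ ℝ (1 : Fin n → ℝ)
  have hsumFun : sumFun ≠ 0 := fun h =>
    NeZero.ne n (by simpa [sumFun] using LinearMap.congr_fun h 1)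
  have hrank := Module.Dual.finrank_ker_add_one_of_ne_zero hsumFun
  rw [Module.finrank_fin_fun] at hrank
  refine (show n - 1 = Module.finrank ℝ (LinearMap.ker sumFun) by omega).trans_le
    ((isHermitian_distLap G).finrank_le_card_le_eigenvalues _ _ ?_)
  intro x hx
  have hsum : ∑ i, x i = 0 := by simpa [sumFun, one_dotProduct] using hx
  rw [dotProduct_distLap_mulVec hc, hsum]
  have := (posSemidef_lapMatrix ℝ Gᶜ).dotProduct_mulVec_nonneg x
  simp only [star_trivial] at this
  linarith

lemma two_le_card_eigenvalues_distLap_le (hc : ¬Gᶜ.Connected) :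
    2 ≤ #{i | (isHermitian_distLap G).eigenvalues i ≤ n} := by
  refine (two_le_finrank_ker_lapMatrix Gᶜ hc).trans
    ((isHermitian_distLap G).finrank_le_card_eigenvalues_le _ _ fun x hx => ?_)
  rw [LinearMap.mem_ker, toLin'_apply] at hx
  rw [dotProduct_distLap_mulVec hc, hx, dotProduct_zero]
  nlinarith [sq_nonneg (∑ i, x i)]

lemma forall_dotProduct_distLap_mulVec_le_iff (hc : ¬Gᶜ.Connected) :
    (∀ x, x ⬝ᵥ (distLap G *ᵥ x) ≤ (n + 2) * (x ⬝ᵥ x)) ↔ ∀ v, Gᶜ.degree v ≤ 1 := by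
  constructor
  · intro h v
    by_contra! hv
    obtain ⟨w, hvw⟩ := (Gᶜ.degree_pos_iff_exists_adj v).1 (by omega)
    have := two_mul_add_degree_add_degree_le hc h hvw
    have : (Gᶜ.degree v : ℝ) + Gᶜ.degree w ≤ 2 := by linarith
    have : Gᶜ.degree v + Gᶜ.degree w ≤ 2 := by exact_mod_cast this
    have := hvw.degree_pos_right
    omega
  · intro h x
    have := dotProduct_lapMatrix_mulVec_le Gᶜ h x
    rw [Nat.cast_one] at this
    rw [dotProduct_distLap_mulVec hc]
    nlinarith [sq_nonneg (∑ i, x i)]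

end distLap

namespace IsDLSpec

variable {n : ℕ} {G : SimpleGraph (Fin n)} {μ : Fin n → ℝ}

lemma apply_zero_le_iff (hμ : IsDLSpec G μ) (hmono : Antitone μ) (hn : 0 < n) (c : ℝ) :
    μ ⟨0, hn⟩ ≤ c ↔ ∀ x, x ⬝ᵥ (distLap G *ᵥ x) ≤ c * (x ⬝ᵥ x) := by
  rw [← (isHermitian_distLap G).forall_le_iff_of_charpoly_eq hμ]
  exact ⟨fun h i => (hmono (Nat.zero_le i.val)).trans h, fun h => h _⟩

lemma apply_sub_two_eq (hc : ¬Gᶜ.Connected) (hμ : IsDLSpec G μ) (hmono : Antitone μ)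
    (hn : 2 ≤ n) : μ ⟨n - 2, by omega⟩ = n := by
  classical
  have : NeZero n := ⟨by omega⟩
  have hcount := (isHermitian_distLap G).card_filter_eq_of_charpoly_eq hμ
  apply le_antisymm
  · refine hmono.apply_le_of_le_card _ ?_
    rw [hcount (· ≤ (n : ℝ))]
    exact (by omega : n - (n - 2) ≤ 2).trans (two_le_card_eigenvalues_distLap_le hc)
  · refine hmono.le_apply_of_le_card _ ?_
    rw [hcount ((n : ℝ) ≤ ·)]
    exact (by omega : n - 2 + 1 ≤ n - 1).trans (le_card_le_eigenvalues_distLap hc)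

end IsDLSpec

lemma Finset.card_filter_card_fiber_eq_two {α β : Type*} [Fintype α] [Fintype β] [DecidableEq β]
    (f : α → β) (h : ∀ b, #{a | f a = b} = 1 ∨ #{a | f a = b} = 2) :
    #{b | #{a | f a = b} = 2} = Fintype.card α - Fintype.card β := by
  have hcard : Fintype.card α = Fintype.card β + #{b | #{a | f a = b} = 2} := by
    rw [← card_univ, card_eq_sum_card_fiberwise (fun a _ => mem_univ (f a)), card_filter,
      ← card_univ (α := β), card_eq_sum_ones, ← sum_add_distrib]
    refine sum_congr rfl fun b _ => ?_
    rcases h b with h1 | h2 <;> simp [*]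
  omega

namespace SimpleGraph

variable {V : Type*} [Fintype V] {G : SimpleGraph V}

lemma IsCompleteMultipartite.exists_surjective_fin_chromaticNumber (h : G.IsCompleteMultipartite)
    {χ : ℕ} (hχ : G.chromaticNumber = χ) :
    ∃ P : V → Fin χ, Function.Surjective P ∧ ∀ u v, G.Adj u v ↔ P u ≠ P v := by
  classical
  have hcard : Fintype.card (Quotient h.setoid) = χ := by
    have := (chromaticNumber_congr h.iso).symm.trans hχ
    rwa [completeMultipartiteGraph.chromaticNumber _ fun c => ⟨c.out, h.setoid.refl _⟩,
      Nat.cast_inj] at this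
  let e := Fintype.equivFinOfCardEq hcard
  refine ⟨fun v => e (Quotient.mk _ v), e.surjective.comp Quotient.mk_surjective, fun u v => ?_⟩
  simp only [ne_eq, EmbeddingLike.apply_eq_iff_eq, Quotient.eq]
  exact not_not.symm

variable [DecidableEq V] [DecidableRel G.Adj]

lemma filter_eq_eq_insert_neighborFinset_compl {α : Type*} [DecidableEq α] {P : V → α}
    (hP : ∀ u v, G.Adj u v ↔ P u ≠ P v) (u : V) :
    ({v | P v = P u} : Finset V) = insert u (Gᶜ.neighborFinset u) := by
  ext v
  by_cases hvu : v = u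
  · simp [hvu]
  · simp [hvu, Ne.symm hvu, hP, eq_comm]

lemma card_filter_eq_eq_degree_compl_add_one {α : Type*} [DecidableEq α] {P : V → α}
    (hP : ∀ u v, G.Adj u v ↔ P u ≠ P v) (u : V) :
    #{v | P v = P u} = Gᶜ.degree u + 1 := by
  rw [filter_eq_eq_insert_neighborFinset_compl hP, card_insert_of_notMem (by simp),
    card_neighborFinset_eq_degree]

lemma isCompleteMultipartite_of_degree_compl_le_one (h : ∀ v, Gᶜ.degree v ≤ 1) :
    G.IsCompleteMultipartite := by
  refine ⟨fun u v w huv hvw => ?_⟩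
  by_cases hu : u = v
  · exact hu ▸ hvw
  by_cases hw : v = w
  · exact hw ▸ huv
  have hu' : u ∈ Gᶜ.neighborFinset v := by simp [Ne.symm hu, huv, G.adj_comm v u]
  have hw' : w ∈ Gᶜ.neighborFinset v := by simp [hw, hvw]
  rw [card_le_one.1 ((card_neighborFinset_eq_degree _ _).trans_le (h v)) u hu' w hw']
  exact G.loopless.irrefl w

theorem forall_degree_compl_le_one_iff {χ : ℕ} (hχ : G.chromaticNumber = χ) :
    (∀ v, Gᶜ.degree v ≤ 1) ↔
      ∃ P : V → Fin χ, (∀ u v, G.Adj u v ↔ P u ≠ P v) ∧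
        (∀ c, #{v | P v = c} = 1 ∨ #{v | P v = c} = 2) ∧
        #{c | #{v | P v = c} = 2} = Fintype.card V - χ := by
  constructor
  · intro h
    obtain ⟨P, hsurj, hP⟩ :=
      (isCompleteMultipartite_of_degree_compl_le_one h).exists_surjective_fin_chromaticNumber hχ
    have hfiber : ∀ c, #{v | P v = c} = 1 ∨ #{v | P v = c} = 2 := by
      intro c
      obtain ⟨u, rfl⟩ := hsurj c
      have := h u
      rw [card_filter_eq_eq_degree_compl_add_one hP]
      omega
    refine ⟨P, hP, hfiber, ?_⟩
    rw [card_filter_card_fiber_eq_two P hfiber, Fintype.card_fin]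
  · rintro ⟨P, hP, hfiber, -⟩ v
    have := card_filter_eq_eq_degree_compl_add_one hP v
    have := hfiber (P v)
    omega

end SimpleGraph

theorem dls_lower_chromatic (n : ℕ) (hn : 4 ≤ n) (G : SimpleGraph (Fin n))
    (hc : ¬ Gᶜ.Connected)
    (χ : ℕ) (hχ : G.chromaticNumber = (χ : ℕ∞)) (hχ2 : χ ≤ n - 1)
    (μ : Fin n → ℝ) (hμ : IsDLSpec G μ) (hmono : Antitone μ) :
    2 ≤ μ ⟨0, by omega⟩ - μ ⟨n - 2, by omega⟩ ∧
    (μ ⟨0, by omega⟩ - μ ⟨n - 2, by omega⟩ = 2 ↔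
      ∃ P : Fin n → Fin χ, (∀ u v, G.Adj u v ↔ P u ≠ P v) ∧
        (∀ c : Fin χ, (Finset.univ.filter (fun v => P v = c)).card = 1 ∨
          (Finset.univ.filter (fun v => P v = c)).card = 2) ∧
        (Finset.univ.filter (fun c : Fin χ =>
          (Finset.univ.filter (fun v => P v = c)).card = 2)).card = n - χ) := by
  classical
  have : NeZero n := ⟨by omega⟩
  have hlargest := hμ.apply_zero_le_iff hmono (by omega)
  have hsecond := hμ.apply_sub_two_eq hc hmono (by omega)
  have hmultipartite := forall_degree_compl_le_one_iff (G := G) hχ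
  rw [Fintype.card_fin] at hmultipartite
  obtain ⟨u, v, huv⟩ := exists_compl_adj_of_chromaticNumber_lt (G := G)
    (by rw [hχ, Fintype.card_fin, Nat.cast_lt]; omega)
  have hlower : (n : ℝ) + 2 ≤ μ ⟨0, by omega⟩ := by
    have := two_mul_add_degree_add_degree_le hc ((hlargest _).1 le_rfl) huv
    have hu : (1 : ℝ) ≤ Gᶜ.degree u := by exact_mod_cast huv.degree_pos_left
    have hv : (1 : ℝ) ≤ Gᶜ.degree v := by exact_mod_cast huv.degree_pos_right
    linarith
  rw [hsecond, ← hmultipartite, ← forall_dotProduct_distLap_mulVec_le_iff hc, ← hlargest]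
  exact ⟨by linarith, ⟨fun h => by linarith, fun h => by linarith⟩⟩
end
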